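/- arXiv:cs/0212003 — 2 statements merged into one kernel-verified Lean document; each statement's English description precedes it below -/
import Mathlib

section
/- Let f : α → α be a function and define the relation B ≤ C iff there exists n : ℕ with f^[n] B = C. Assume ≤ is antisymmetric. Let P : α → Prop be a predicate and C : α an element such that there exists some D with C ≤ D and P D. Then there exists a unique D : α such that C ≤ D, P D, and for every E with C ≤ E and P E one has D ≤ E. -/
theorem Function.exists_iterate_iterate_eq_of_le {α : Type*} (f : α → α) (x : α) {m n : ℕ}
    (h : m ≤ n) : ∃ k : ℕ, f^[k] (f^[m] x) = f^[n] x :=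
  ⟨n - m, by rw [← Function.iterate_add_apply, Nat.sub_add_cancel h]⟩

theorem Function.exists_least_iterate {α : Type*} (f : α → α) (P : α → Prop) (C : α)
    (hex : ∃ D : α, (∃ n : ℕ, f^[n] C = D) ∧ P D) :
    ∃ D : α, (∃ n : ℕ, f^[n] C = D) ∧ P D ∧
      ∀ E : α, (∃ n : ℕ, f^[n] C = E) → P E → ∃ n : ℕ, f^[n] D = E := by
  classical
  obtain ⟨_, ⟨n, rfl⟩, hPn⟩ := hex
  have h : ∃ n : ℕ, P (f^[n] C) := ⟨n, hPn⟩
  refine ⟨f^[Nat.find h] C, ⟨_, rfl⟩, Nat.find_spec h, ?_⟩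
  rintro _ ⟨m, rfl⟩ hPm
  exact f.exists_iterate_iterate_eq_of_le C (Nat.find_min' h hPm)

/-- If the subclass relation `B ≤ C` iff `∃ n, f^[n] B = C` is
antisymmetric, then for a predicate `P` that holds of some ancestor of
`C`, there is a unique ancestor of `C` satisfying `P` that is least with
respect to `≤`. -/
theorem unique_least_ancestor {α : Type*} (f : α → α)
    (hanti : ∀ B C : α, (∃ n : ℕ, f^[n] B = C) → (∃ n : ℕ, f^[n] C = B) → B = C)
    (P : α → Prop) (C : α)
    (hex : ∃ D : α, (∃ n : ℕ, f^[n] C = D) ∧ P D) :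
    ∃! D : α, (∃ n : ℕ, f^[n] C = D) ∧ P D ∧
      ∀ E : α, (∃ n : ℕ, f^[n] C = E) → P E → ∃ n : ℕ, f^[n] D = E := by
  obtain ⟨D, hCD, hPD, hleast⟩ := f.exists_least_iterate P C hex
  refine ⟨D, ⟨hCD, hPD, hleast⟩, ?_⟩
  rintro D' ⟨hCD', hPD', hleast'⟩
  exact hanti D' D (hleast' D hCD hPD) (hleast D' hCD' hPD')
end

section
/- Let f : α → α be a function and define the relation B ≤ C iff there exists n : ℕ with f^[n] B = C. Let L be a type and loctype : L → α a function, and for C : α define ⟦C⟧ := insert none {x : Option L | ∃ ℓ, x = some ℓ ∧ loctype ℓ ≤ C}. If B and C are incomparable, i.e. ¬(B ≤ C) and ¬(C ≤ B), then ⟦B⟧ ∩ ⟦C⟧ = {none}. -/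
/-!
The superclasses of a class `A` form the chain `A, f A, f (f A), …`, so any two superclasses
of `A` are comparable. Hence a location in both `⟦B⟧` and `⟦C⟧` would make `B` and `C`
comparable.
-/

/-- The subclass relation determined by the superclass function `f`:
`B ≤ C` iff some iterate of `f` maps `B` to `C`. -/
def subcl {α : Type*} (f : α → α) (B C : α) : Prop := ∃ n : ℕ, f^[n] B = C

/-- The meaning of a class type `C`: `nil` (modelled by `none`) together
with all locations whose class is a subclass of `C`. -/
def classMeaning {α L : Type*} (f : α → α) (loctype : L → α) (C : α) :
    Set (Option L) :=
  insert none {x : Option L | ∃ ℓ : L, x = some ℓ ∧ subcl f (loctype ℓ) C}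

section

variable {α L : Type*} {f : α → α}

theorem subcl_iterate_of_le (A : α) {m n : ℕ} (h : m ≤ n) : subcl f (f^[m] A) (f^[n] A) :=
  ⟨n - m, by rw [← Function.iterate_add_apply, Nat.sub_add_cancel h]⟩

theorem subcl_or_subcl_of_subcl {A B C : α} (hB : subcl f A B) (hC : subcl f A C) :
    subcl f B C ∨ subcl f C B := by
  obtain ⟨m, rfl⟩ := hB
  obtain ⟨n, rfl⟩ := hC
  rcases le_total m n with h | h
  exacts [.inl (subcl_iterate_of_le A h), .inr (subcl_iterate_of_le A h)]

theorem none_mem_classMeaning (loctype : L → α) (C : α) : none ∈ classMeaning f loctype C :=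
  Set.mem_insert _ _

theorem some_mem_classMeaning_iff {loctype : L → α} {C : α} {ℓ : L} :
    some ℓ ∈ classMeaning f loctype C ↔ subcl f (loctype ℓ) C := by
  simp [classMeaning]

end

/-- The paper's Lemma 4.2: incomparable class types share only the nil
value. -/
theorem meaning_inter_of_incomparable {α L : Type*} (f : α → α)
    (loctype : L → α) (B C : α)
    (h1 : ¬ subcl f B C) (h2 : ¬ subcl f C B) :
    classMeaning f loctype B ∩ classMeaning f loctype C = {none} := by
  refine Set.eq_singleton_iff_unique_mem.2
    ⟨⟨none_mem_classMeaning loctype B, none_mem_classMeaning loctype C⟩, ?_⟩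
  rintro (_ | ℓ) ⟨hB, hC⟩
  · rfl
  · exact (subcl_or_subcl_of_subcl (some_mem_classMeaning_iff.1 hB)
      (some_mem_classMeaning_iff.1 hC)).elim (absurd · h1) (absurd · h2)
end
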